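/- Explicit cumulative-violation bound for the exponential penalty: if D > 0, L_g > 0, 0 < λ ≤ 1/(2·√(2T)·D·L_g), |f̂_t(x)| ≤ F for all x ∈ X and all t, and there exists u ∈ X with ĝ_t(u) ≤ 0 for all t ∈ {1,…,T}, then the adaptive OGD iterates with penalty Φ(v) := exp(λv) − 1 satisfy V̂_T ≤ (1/λ)·log(2·(1 + √2·D + √(2T)·D·L_f + 2·F·T)). -/

import Mathlib

/-!
Write `P_t = λ exp (λ V̂_t) = Φ'(V̂_t)`. Convexity of `exp` gives `Φ(V̂_T) ≤ ∑ P_t ĝ_t⁺(x_t)`.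
Testing the subgradient inequality of `L̂_t` at a feasible point `v` bounds `P_t ĝ_t⁺(x_t)` by
the linearised regret `⟪u_t, x_t - v⟫` plus `2F`, and the AdaGrad-type analysis of projected OGD
bounds the total linearised regret by `√2 D √δ_T`. As `P` is nondecreasing, `L̂_t` is
`(L_f + P_T L_g)`-Lipschitz, so its subgradient `u_t` has norm at most `L_f + P_T L_g` and
`√δ_T ≤ 1 + √T (L_f + P_T L_g)`. The choice of `λ` makes the resulting term
`√(2T) D L_g λ exp (λ V̂_T)` at most `exp (λ V̂_T) / 2`, so it is absorbed into the left-hand side.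
-/

open Real Finset RealInnerProductSpace

theorem sub_div_sqrt_le_two_mul_sqrt_sub {a b : ℝ} (ha : 0 ≤ a) (hb : 0 < b) :
    (b - a) / √b ≤ 2 * (√b - √a) := by
  rw [div_le_iff₀ (sqrt_pos.2 hb)]
  nlinarith [sq_sqrt ha, sq_sqrt hb.le, sq_nonneg (√b - √a)]

theorem sum_sub_div_sqrt_le {δ : ℕ → ℝ} (hδ : ∀ t, 0 < δ t) (n : ℕ) :
    ∑ t ∈ Icc 1 n, (δ t - δ (t - 1)) / √(δ t) ≤ 2 * (√(δ n) - √(δ 0)) := by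
  induction n with
  | zero => simp
  | succ n ih =>
    rw [sum_Icc_succ_top (by omega), Nat.add_sub_cancel]
    linarith [sub_div_sqrt_le_two_mul_sqrt_sub (hδ n).le (hδ (n + 1))]

theorem exp_sub_exp_le_exp_mul_sub (a b : ℝ) : exp b - exp a ≤ exp b * (b - a) := by
  have h := add_one_le_exp (a - b)
  rw [exp_sub, le_div_iff₀ (exp_pos b)] at h
  nlinarith

theorem exp_mul_sum_sub_one_le (lam : ℝ) (c : ℕ → ℝ) (n : ℕ) :
    exp (lam * ∑ t ∈ Icc 1 n, c t) - 1 ≤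
      ∑ t ∈ Icc 1 n, lam * exp (lam * ∑ τ ∈ Icc 1 t, c τ) * c t := by
  induction n with
  | zero => simp
  | succ n ih =>
    have h := exp_sub_exp_le_exp_mul_sub (lam * ∑ t ∈ Icc 1 n, c t)
      (lam * ∑ t ∈ Icc 1 (n + 1), c t)
    rw [sum_Icc_succ_top (by omega : 1 ≤ n + 1)
      (fun t => lam * exp (lam * ∑ τ ∈ Icc 1 t, c τ) * c t)]
    rw [sum_Icc_succ_top (by omega : 1 ≤ n + 1) c] at h ⊢
    linarith

theorem sum_Ico_mul_sub_succ_add_le {a w : ℕ → ℝ} {B : ℝ} (hw : Monotone w) (hw1 : 0 ≤ w 1)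
    {n : ℕ} (hn : 1 ≤ n) (ha : ∀ t ∈ Icc 1 n, a t ≤ B) :
    ∑ t ∈ Ico 1 n, w t * (a t - a (t + 1)) + w n * a n ≤ w n * B := by
  induction n, hn using Nat.le_induction with
  | base => simpa using mul_le_mul_of_nonneg_left (ha 1 (by simp)) hw1
  | succ n hn ih =>
    have ih := ih fun t ht => ha t (Icc_subset_Icc_right n.le_succ ht)
    have hB := ha (n + 1) (by simp)
    have hinc : 0 ≤ w (n + 1) - w n := sub_nonneg.2 (hw n.le_succ)
    rw [sum_Ico_succ_top hn]
    nlinarith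

theorem penalized_sub_le {f₀ f₁ g₀ g₁ P Lf Lg r : ℝ} (hP : 0 ≤ P) (hf : |f₁ - f₀| ≤ Lf * r)
    (hg : |g₁ - g₀| ≤ Lg * r) : f₁ + P * max g₁ 0 - (f₀ + P * max g₀ 0) ≤ (Lf + P * Lg) * r := by
  have hmax := (le_abs_self _).trans ((abs_max_sub_max_le_abs g₁ g₀ 0).trans hg)
  nlinarith [le_abs_self (f₁ - f₀), mul_le_mul_of_nonneg_left hmax hP]

theorem le_one_div_mul_log_of_exp_le {lam V A B : ℝ} (hlam : 0 < lam) (hB : B ≤ 1 / 2)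
    (h : exp (lam * V) ≤ A + B * exp (lam * V)) : V ≤ 1 / lam * log (2 * A) := by
  have hA : exp (lam * V) ≤ 2 * A := by nlinarith [exp_pos (lam * V)]
  rw [one_div_mul_eq_div, le_div_iff₀ hlam, mul_comm]
  exact (le_log_iff_exp_le ((exp_pos _).trans_le hA)).2 hA

theorem nonneg_of_abs_sub_le_mul_norm {F : Type*} [NormedAddCommGroup F] [Nontrivial F]
    {f : F → ℝ} {K : ℝ} (hf : ∀ x y, |f x - f y| ≤ K * ‖x - y‖) : 0 ≤ K := by
  obtain ⟨z, hz⟩ := exists_ne (0 : F)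
  have h := (abs_nonneg _).trans (hf z 0)
  rw [sub_zero] at h
  exact nonneg_of_mul_nonneg_left h (norm_pos_iff.2 hz)

theorem sqrt_one_add_sum_sq_le {ι F : Type*} [SeminormedAddCommGroup F] (s : Finset ι) {u : ι → F}
    {C : ℝ} (hC : 0 ≤ C) (hu : ∀ i ∈ s, ‖u i‖ ≤ C) :
    √(1 + ∑ i ∈ s, ‖u i‖ ^ 2) ≤ 1 + √(#s) * C := by
  have hsum : ∑ i ∈ s, ‖u i‖ ^ 2 ≤ #s * C ^ 2 := by
    simpa using sum_le_sum fun i hi => pow_le_pow_left₀ (norm_nonneg _) (hu i hi) 2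
  rw [sqrt_le_iff]
  refine ⟨by positivity, ?_⟩
  nlinarith [sq_sqrt (Nat.cast_nonneg (α := ℝ) #s), sqrt_nonneg (#s : ℝ)]

section InnerProductSpace

variable {E : Type*} [NormedAddCommGroup E] [InnerProductSpace ℝ E]

theorem Convex.norm_sub_le_of_forall_norm_sub_le {X : Set E} (hX : Convex ℝ X) {p z v : E}
    (hp : p ∈ X) (hv : v ∈ X) (hmin : ∀ y ∈ X, ‖p - z‖ ≤ ‖y - z‖) : ‖v - p‖ ≤ ‖v - z‖ := by
  have : Nonempty X := ⟨⟨p, hp⟩⟩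
  have hinf : ‖z - p‖ = ⨅ y : X, ‖z - y‖ :=
    le_antisymm (le_ciInf fun y => by simpa only [norm_sub_rev z] using hmin y y.2)
      (ciInf_le ⟨0, by rintro _ ⟨y, rfl⟩; positivity⟩ (⟨p, hp⟩ : X))
  have hobtuse : ⟪z - p, v - p⟫ ≤ 0 := (norm_eq_iInf_iff_real_inner_le_zero hX hp).1 hinf v hv
  have hsq : ‖v - p‖ ^ 2 ≤ ‖v - z‖ ^ 2 := by
    have : v - z = (v - p) - (z - p) := by abel
    rw [this, norm_sub_sq_real (v - p), real_inner_comm]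
    nlinarith [sq_nonneg ‖z - p‖]
  exact (sq_le_sq₀ (norm_nonneg _) (norm_nonneg _)).1 hsq

theorem norm_sub_smul_sub_sq (x u v : E) (η : ℝ) :
    ‖x - η • u - v‖ ^ 2 = ‖x - v‖ ^ 2 - 2 * η * ⟪u, x - v⟫ + η ^ 2 * ‖u‖ ^ 2 := by
  rw [show x - η • u - v = (x - v) - η • u by abel, norm_sub_sq_real, real_inner_smul_right,
    norm_smul, real_inner_comm, Real.norm_eq_abs, mul_pow, sq_abs]
  ring

theorem inner_le_of_norm_sub_le_norm_sub_smul_sub {x u v p : E} {η : ℝ} (hη : 0 < η)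
    (hp : ‖p - v‖ ≤ ‖x - η • u - v‖) :
    ⟪u, x - v⟫ ≤ (2 * η)⁻¹ * (‖x - v‖ ^ 2 - ‖p - v‖ ^ 2) + η * ‖u‖ ^ 2 / 2 := by
  have hsq := pow_le_pow_left₀ (norm_nonneg _) hp 2
  rw [norm_sub_smul_sub_sq] at hsq
  calc ⟪u, x - v⟫ = (2 * η)⁻¹ * (2 * η * ⟪u, x - v⟫) := by field_simp
    _ ≤ (2 * η)⁻¹ * (‖x - v‖ ^ 2 - ‖p - v‖ ^ 2 + η ^ 2 * ‖u‖ ^ 2) := by gcongr; linarith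
    _ = _ := by field_simp

theorem norm_le_of_subgradient_of_le_mul_norm {h : E → ℝ} {x u : E} {K : ℝ} (hK : 0 ≤ K)
    (hsub : ∀ y, h x + ⟪u, y - x⟫ ≤ h y) (hlip : ∀ y, h y - h x ≤ K * ‖y - x‖) : ‖u‖ ≤ K := by
  have h1 : ‖u‖ ^ 2 ≤ K * ‖u‖ := by
    have h1 := hsub (x + u)
    have h2 := hlip (x + u)
    rw [add_sub_cancel_left, real_inner_self_eq_norm_sq] at h1
    rw [add_sub_cancel_left] at h2
    linarith
  rcases (norm_nonneg u).eq_or_lt with h0 | h0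
  · rw [← h0]; exact hK
  · nlinarith

theorem norm_le_of_penalized_subgradient {f g : E → ℝ} {x u : E} {Lf Lg P : ℝ} (hLf : 0 ≤ Lf)
    (hLg : 0 ≤ Lg) (hP : 0 ≤ P) (hf : ∀ y, |f y - f x| ≤ Lf * ‖y - x‖)
    (hg : ∀ y, |g y - g x| ≤ Lg * ‖y - x‖)
    (hsub : ∀ y, f y + P * max (g y) 0 ≥ f x + P * max (g x) 0 + ⟪u, y - x⟫) :
    ‖u‖ ≤ Lf + P * Lg :=
  norm_le_of_subgradient_of_le_mul_norm (by positivity) hsub fun y =>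
    penalized_sub_le hP (hf y) (hg y)

theorem mul_max_le_inner_add_of_subgradient {f g : E → ℝ} {x u v : E} {P F : ℝ}
    (hsub : ∀ y, f y + P * max (g y) 0 ≥ f x + P * max (g x) 0 + ⟪u, y - x⟫) (hgv : g v ≤ 0)
    (hfx : |f x| ≤ F) (hfv : |f v| ≤ F) : P * max (g x) 0 ≤ ⟪u, x - v⟫ + 2 * F := by
  have h := hsub v
  rw [max_eq_right hgv, show v - x = -(x - v) by abel, inner_neg_right] at h
  linarith [abs_le.1 hfx, abs_le.1 hfv]

theorem sum_inner_le_of_projected_steps {X : Set E} (hX : Convex ℝ X) {x u : ℕ → E}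
    {η : ℕ → ℝ} {v : E} {D : ℝ} {T : ℕ} (hT : 0 < T) (hη : ∀ t, 0 < η t) (hη_anti : Antitone η)
    (hx : ∀ t ∈ Icc 1 T, x t ∈ X) (hv : v ∈ X) (hdist : ∀ t ∈ Icc 1 T, ‖x t - v‖ ≤ D)
    (hupdate : ∀ t ∈ Icc 1 (T - 1), ∀ y ∈ X,
      ‖x (t + 1) - (x t - η t • u t)‖ ≤ ‖y - (x t - η t • u t)‖) :
    ∑ t ∈ Icc 1 T, ⟪u t, x t - v⟫ ≤ D ^ 2 / (2 * η T) + ∑ t ∈ Icc 1 T, η t * ‖u t‖ ^ 2 / 2 := by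
  set a : ℕ → ℝ := fun t => ‖x t - v‖ ^ 2
  set w : ℕ → ℝ := fun t => (2 * η t)⁻¹
  have hw : Monotone w := fun s t hst =>
    inv_anti₀ (by linarith [hη t]) (by linarith [hη_anti hst])
  have hstep : ∀ t ∈ Ico 1 T, ⟪u t, x t - v⟫ ≤ w t * (a t - a (t + 1)) + η t * ‖u t‖ ^ 2 / 2 := by
    intro t ht
    have ht' : t ∈ Icc 1 (T - 1) := by simp only [mem_Ico, mem_Icc] at ht ⊢; omega
    refine inner_le_of_norm_sub_le_norm_sub_smul_sub (hη t) ?_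
    rw [norm_sub_rev _ v, norm_sub_rev _ v]
    exact hX.norm_sub_le_of_forall_norm_sub_le (hx (t + 1) (by simp at ht' ⊢; omega)) hv
      (hupdate t ht')
  have hlast : ⟪u T, x T - v⟫ ≤ w T * a T + η T * ‖u T‖ ^ 2 / 2 := by
    have := inner_le_of_norm_sub_le_norm_sub_smul_sub (v := v) (p := x T - η T • u T) (hη T) le_rfl
    have : 0 ≤ w T * ‖x T - η T • u T - v‖ ^ 2 :=
      mul_nonneg (inv_nonneg.2 (by linarith [hη T])) (sq_nonneg _)
    linarith
  have habel := sum_Ico_mul_sub_succ_add_le hw (inv_nonneg.2 (by linarith [hη 1])) hT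
    (a := a) (B := D ^ 2) fun t ht => pow_le_pow_left₀ (norm_nonneg _) (hdist t ht) 2
  calc ∑ t ∈ Icc 1 T, ⟪u t, x t - v⟫
      = ∑ t ∈ Ico 1 T, ⟪u t, x t - v⟫ + ⟪u T, x T - v⟫ := by
        rw [← Ico_add_one_right_eq_Icc, sum_Ico_succ_top hT]
    _ ≤ ∑ t ∈ Ico 1 T, (w t * (a t - a (t + 1)) + η t * ‖u t‖ ^ 2 / 2)
        + (w T * a T + η T * ‖u T‖ ^ 2 / 2) := add_le_add (sum_le_sum hstep) hlast
    _ = (∑ t ∈ Ico 1 T, w t * (a t - a (t + 1)) + w T * a T)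
        + ∑ t ∈ Icc 1 T, η t * ‖u t‖ ^ 2 / 2 := by
        rw [sum_add_distrib, ← Ico_add_one_right_eq_Icc, sum_Ico_succ_top hT]; ring
    _ ≤ w T * D ^ 2 + ∑ t ∈ Icc 1 T, η t * ‖u t‖ ^ 2 / 2 := by gcongr
    _ = D ^ 2 / (2 * η T) + ∑ t ∈ Icc 1 T, η t * ‖u t‖ ^ 2 / 2 := by rw [div_eq_inv_mul]

theorem sum_inner_le_of_adaptive_projected_steps {X : Set E} (hX : Convex ℝ X) {x u : ℕ → E}
    {δ η : ℕ → ℝ} {v : E} {D : ℝ} {T : ℕ} (hT : 0 < T) (hD : 0 < D)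
    (hδ : ∀ t, δ t = 1 + ∑ τ ∈ Icc 1 t, ‖u τ‖ ^ 2) (hη : ∀ t, η t = D / (√2 * √(δ t)))
    (hx : ∀ t ∈ Icc 1 T, x t ∈ X) (hv : v ∈ X) (hdist : ∀ t ∈ Icc 1 T, ‖x t - v‖ ≤ D)
    (hupdate : ∀ t ∈ Icc 1 (T - 1), ∀ y ∈ X,
      ‖x (t + 1) - (x t - η t • u t)‖ ≤ ‖y - (x t - η t • u t)‖) :
    ∑ t ∈ Icc 1 T, ⟪u t, x t - v⟫ ≤ √2 * D * √(δ T) := by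
  have hδ_succ (t : ℕ) : δ (t + 1) = δ t + ‖u (t + 1)‖ ^ 2 := by
    rw [hδ, hδ, sum_Icc_succ_top (by omega)]; ring
  have hδ_one_le (t : ℕ) : 1 ≤ δ t := by
    rw [hδ]; linarith [sum_nonneg fun τ (_ : τ ∈ Icc 1 t) => sq_nonneg ‖u τ‖]
  have hδ_pos (t : ℕ) : 0 < δ t := by linarith [hδ_one_le t]
  have hδ_mono : Monotone δ := monotone_nat_of_le_succ fun t => by
    rw [hδ_succ]; linarith [sq_nonneg ‖u (t + 1)‖]
  have hs2 : 0 < √2 := by positivity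
  have hη_pos (t : ℕ) : 0 < η t := by rw [hη]; have := hδ_pos t; positivity
  have hη_anti : Antitone η := fun s t hst => by
    have := hδ_pos s
    rw [hη, hη]; gcongr; exact hδ_mono hst
  have hsteps : ∑ t ∈ Icc 1 T, η t * ‖u t‖ ^ 2 ≤ D / √2 * (2 * (√(δ T) - 1)) := by
    have h := sum_sub_div_sqrt_le hδ_pos T
    rw [show δ 0 = 1 by simp [hδ], sqrt_one] at h
    calc ∑ t ∈ Icc 1 T, η t * ‖u t‖ ^ 2
        = D / √2 * ∑ t ∈ Icc 1 T, (δ t - δ (t - 1)) / √(δ t) := by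
          rw [mul_sum]
          refine sum_congr rfl fun t ht => ?_
          obtain ⟨s, rfl⟩ : ∃ s, t = s + 1 := ⟨t - 1, by simp at ht; omega⟩
          rw [hη, hδ_succ, Nat.add_sub_cancel]
          field_simp
          ring
      _ ≤ D / √2 * (2 * (√(δ T) - 1)) := by gcongr
  have hreg := sum_inner_le_of_projected_steps hX hT hη_pos hη_anti hx hv hdist hupdate
  have hsq : √2 * √2 = 2 := mul_self_sqrt zero_le_two
  have hfirst : D ^ 2 / (2 * η T) = √2 * D * √(δ T) / 2 := by
    rw [hη]; field_simp
  have hD2 : D / √2 = √2 * D / 2 := by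
    field_simp; linarith
  rw [← sum_div, hfirst] at hreg
  rw [hD2] at hsteps
  nlinarith

end InnerProductSpace

theorem exponential_penalty_ogd_ccv_general
    (d T : ℕ) (hd : 0 < d) (hT : 0 < T)
    (X : Set (EuclideanSpace ℝ (Fin d)))
    (hXcpt : IsCompact X) (hXconv : Convex ℝ X)
    (D : ℝ) (hD : D = Metric.diam X) (hDpos : 0 < D)
    (Lf Lg F : ℝ) (hLg : 0 < Lg)
    (lam : ℝ) (hlam : 0 < lam)
    (hlam' : lam ≤ 1 / (2 * Real.sqrt (2 * T) * D * Lg))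
    (f g : ℕ → EuclideanSpace ℝ (Fin d) → ℝ)
    (hfLip : ∀ t ∈ Finset.Icc 1 T, ∀ x y, |f t x - f t y| ≤ Lf * ‖x - y‖)
    (hgLip : ∀ t ∈ Finset.Icc 1 T, ∀ x y, |g t x - g t y| ≤ Lg * ‖x - y‖)
    (hfbd : ∀ t ∈ Finset.Icc 1 T, ∀ x ∈ X, |f t x| ≤ F)
    -- decisions and subgradients
    (x u : ℕ → EuclideanSpace ℝ (Fin d))
    (hx : ∀ t ∈ Finset.Icc 1 T, x t ∈ X)
    -- cumulative violation and surrogate losses with exponential penalty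
    (V : ℕ → ℝ)
    (hV : ∀ t, V t = ∑ τ ∈ Finset.Icc 1 t, max (g τ (x τ)) 0)
    (L : ℕ → EuclideanSpace ℝ (Fin d) → ℝ)
    (hL : ∀ t y, L t y = f t y + (lam * Real.exp (lam * V t)) * max (g t y) 0)
    -- u t is a subgradient of L t at x t
    (hsub : ∀ t ∈ Finset.Icc 1 T, ∀ y,
      L t y ≥ L t (x t) + (inner ℝ (u t) (y - x t) : ℝ))
    -- step sizes
    (δ η : ℕ → ℝ)
    (hδ : ∀ t, δ t = 1 + ∑ τ ∈ Finset.Icc 1 t, ‖u τ‖ ^ 2)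
    (hη : ∀ t, η t = D / (Real.sqrt 2 * Real.sqrt (δ t)))
    -- projected gradient update
    (hupdate : ∀ t ∈ Finset.Icc 1 (T - 1), ∀ y ∈ X,
      ‖x (t+1) - (x t - η t • u t)‖ ≤ ‖y - (x t - η t • u t)‖)
    -- a feasible point exists
    (hfeas : ∃ v ∈ X, ∀ t ∈ Finset.Icc 1 T, g t v ≤ 0) :
    V T ≤ (1 / lam) * Real.log (2 * (1 + Real.sqrt 2 * D
        + Real.sqrt (2 * T) * D * Lf + 2 * F * T)) := by
  obtain ⟨v, hvX, hgv⟩ := hfeas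
  simp only [hL] at hsub
  have hLf : 0 ≤ Lf :=
    have : Nonempty (Fin d) := ⟨⟨0, hd⟩⟩
    nonneg_of_abs_sub_le_mul_norm (hfLip 1 (mem_Icc.2 ⟨le_rfl, hT⟩))
  have hu : ∀ t ∈ Icc 1 T, ‖u t‖ ≤ Lf + lam * exp (lam * V T) * Lg := fun t ht => by
    have hVt : V t ≤ V T := by
      rw [hV, hV]
      exact sum_le_sum_of_subset_of_nonneg (Icc_subset_Icc_right (mem_Icc.1 ht).2)
        fun _ _ _ => le_max_right _ _
    refine (norm_le_of_penalized_subgradient hLf hLg.le (by positivity) (hfLip t ht · (x t))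
      (hgLip t ht · (x t)) (hsub t ht)).trans ?_
    gcongr
  have hδT : √(δ T) ≤ 1 + √T * (Lf + lam * exp (lam * V T) * Lg) := by
    simpa [hδ] using sqrt_one_add_sum_sq_le (Icc 1 T) (by positivity) hu
  have hdist : ∀ t ∈ Icc 1 T, ‖x t - v‖ ≤ D := fun t ht => by
    simpa [hD, dist_eq_norm] using Metric.dist_le_diam_of_mem hXcpt.isBounded (hx t ht) hvX
  have hreg := sum_inner_le_of_adaptive_projected_steps hXconv hT hDpos hδ hη hx hvX hdist hupdate
  have hpen : ∑ t ∈ Icc 1 T, lam * exp (lam * V t) * max (g t (x t)) 0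
      ≤ ∑ t ∈ Icc 1 T, ⟪u t, x t - v⟫ + 2 * F * T := by
    simpa [sum_add_distrib, mul_comm] using sum_le_sum fun t ht =>
      mul_max_le_inner_add_of_subgradient (hsub t ht) (hgv t ht) (hfbd t ht _ (hx t ht))
        (hfbd t ht v hvX)
  have hexp : exp (lam * V T) - 1 ≤ ∑ t ∈ Icc 1 T, lam * exp (lam * V t) * max (g t (x t)) 0 := by
    simpa only [← hV] using exp_mul_sum_sub_one_le lam (fun t => max (g t (x t)) 0) T
  have hB : lam * (√(2 * T) * D * Lg) ≤ 1 / 2 := by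
    rw [le_div_iff₀ (by positivity)] at hlam'
    linarith
  refine le_one_div_mul_log_of_exp_le hlam hB ?_
  have hregδ := mul_le_mul_of_nonneg_left hδT (by positivity : 0 ≤ √2 * D)
  rw [sqrt_mul zero_le_two]
  linarith

/-- Explicit cumulative-violation bound for the exponential
penalty `Φ(v) = exp(λv) − 1` with `0 < λ ≤ 1/(2·√(2T)·D·L_g)`:
`V̂_T ≤ (1/λ)·log(2·(1 + √2·D + √(2T)·D·L_f + 2·F·T))`. -/
theorem exponential_penalty_ogd_ccv
    (d T : ℕ) (hd : 0 < d) (hT : 0 < T)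
    (X : Set (EuclideanSpace ℝ (Fin d)))
    (hXne : X.Nonempty) (hXcpt : IsCompact X) (hXconv : Convex ℝ X)
    (D : ℝ) (hD : D = Metric.diam X) (hDpos : 0 < D)
    (Lf Lg F : ℝ) (hLg : 0 < Lg)
    (lam : ℝ) (hlam : 0 < lam)
    (hlam' : lam ≤ 1 / (2 * Real.sqrt (2 * T) * D * Lg))
    (f g : ℕ → EuclideanSpace ℝ (Fin d) → ℝ)
    (hfconv : ∀ t ∈ Finset.Icc 1 T, ConvexOn ℝ Set.univ (f t))
    (hgconv : ∀ t ∈ Finset.Icc 1 T, ConvexOn ℝ Set.univ (g t))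
    (hfLip : ∀ t ∈ Finset.Icc 1 T, ∀ x y, |f t x - f t y| ≤ Lf * ‖x - y‖)
    (hgLip : ∀ t ∈ Finset.Icc 1 T, ∀ x y, |g t x - g t y| ≤ Lg * ‖x - y‖)
    (hfbd : ∀ t ∈ Finset.Icc 1 T, ∀ x ∈ X, |f t x| ≤ F)
    -- decisions and subgradients
    (x u : ℕ → EuclideanSpace ℝ (Fin d))
    (hx : ∀ t ∈ Finset.Icc 1 T, x t ∈ X)
    -- cumulative violation and surrogate losses with exponential penalty
    (V : ℕ → ℝ)
    (hV : ∀ t, V t = ∑ τ ∈ Finset.Icc 1 t, max (g τ (x τ)) 0)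
    (L : ℕ → EuclideanSpace ℝ (Fin d) → ℝ)
    (hL : ∀ t y, L t y = f t y + (lam * Real.exp (lam * V t)) * max (g t y) 0)
    -- u t is a subgradient of L t at x t
    (hsub : ∀ t ∈ Finset.Icc 1 T, ∀ y,
      L t y ≥ L t (x t) + (inner ℝ (u t) (y - x t) : ℝ))
    -- step sizes
    (δ η : ℕ → ℝ)
    (hδ : ∀ t, δ t = 1 + ∑ τ ∈ Finset.Icc 1 t, ‖u τ‖ ^ 2)
    (hη : ∀ t, η t = D / (Real.sqrt 2 * Real.sqrt (δ t)))
    -- projected gradient update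
    (hupdate : ∀ t ∈ Finset.Icc 1 (T - 1), ∀ y ∈ X,
      ‖x (t+1) - (x t - η t • u t)‖ ≤ ‖y - (x t - η t • u t)‖)
    -- a feasible point exists
    (hfeas : ∃ v ∈ X, ∀ t ∈ Finset.Icc 1 T, g t v ≤ 0) :
    V T ≤ (1 / lam) * Real.log (2 * (1 + Real.sqrt 2 * D
        + Real.sqrt (2 * T) * D * Lf + 2 * F * T)) :=
  exponential_penalty_ogd_ccv_general d T hd hT X hXcpt hXconv D hD hDpos Lf Lg F hLg lam hlam hlam'
    f g hfLip hgLip hfbd x u hx V hV L hL hsub δ η hδ hη hupdate hfeas
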